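/- arXiv:1710.06678 — 2 statements merged into one kernel-verified Lean document; each statement's English description precedes it below -/
import Mathlib

section
/- For every PNF formula φ, the set D(φ) of partial derivative descendants of φ is finite. -/
open scoped Classical

/-- LTL formulae in positive normal form. -/
inductive LTL (AP : Type) : Type
  | pos  : AP → LTL AP                      -- atomic proposition p
  | nneg : AP → LTL AP                      -- negated atomic proposition ¬p
  | tt   : LTL AP
  | ff   : LTL AP
  | conj : LTL AP → LTL AP → LTL AP
  | disj : LTL AP → LTL AP → LTL AP
  | next : LTL AP → LTL AP
  | untl : LTL AP → LTL AP → LTL AP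
  | rels : LTL AP → LTL AP → LTL AP
  deriving DecidableEq

/-- Literals over AP. -/
inductive Lit (AP : Type) : Type
  | pos : AP → Lit AP
  | neg : AP → Lit AP
  deriving DecidableEq

namespace Lit

variable {AP : Type} {S : Type}

/-- Negation of a literal. -/
def negate : Lit AP → Lit AP
  | pos p => neg p
  | neg p => pos p

/-- The LTL formula corresponding to a literal. -/
def toLTL : Lit AP → LTL AP
  | pos p => LTL.pos p
  | neg p => LTL.nneg p

/-- A literal holds at a symbol `x` relative to the interpretation `I`. -/
def Holds (I : S → Set AP) (x : S) : Lit AP → Prop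
  | pos p => p ∈ I x
  | neg p => p ∉ I x

end Lit

/-- A monomial: `none` represents ff, and `some s` a finite set of literals. -/
abbrev Mono (AP : Type) : Type := Option (Finset (Lit AP))

namespace LTL

variable {AP : Type} {S : Type}

/-- Suffix of an infinite word: `suffix σ n = σ[n..]`. -/
def suffix (σ : ℕ → S) (n : ℕ) : ℕ → S := fun i => σ (n + i)

/-- Satisfaction `σ ⊨ φ` of an LTL formula on an infinite word. -/
def Sat (I : S → Set AP) : LTL AP → (ℕ → S) → Prop
  | pos p, σ => p ∈ I (σ 0)
  | nneg p, σ => p ∉ I (σ 0)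
  | tt, _ => True
  | ff, _ => False
  | conj φ ψ, σ => Sat I φ σ ∧ Sat I ψ σ
  | disj φ ψ, σ => Sat I φ σ ∨ Sat I ψ σ
  | next φ, σ => Sat I φ (suffix σ 1)
  | untl φ ψ, σ => ∃ n, (∀ j < n, Sat I φ (suffix σ j)) ∧ Sat I ψ (suffix σ n)
  | rels φ ψ, σ => ∀ n, Sat I ψ (suffix σ n) ∨ ∃ j < n, Sat I φ (suffix σ j)

/-- A monomial is valid if it contains no complementary pair of literals. -/
def MonoValid : Mono AP → Prop
  | none => True
  | some s => ∀ ℓ ∈ s, ℓ.negate ∉ s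

/-- Smart conjunction `μ ⩀ ν` of monomials. -/
noncomputable def scm [DecidableEq AP] : Mono AP → Mono AP → Mono AP
  | some μ, some ν =>
      if ∃ ℓ ∈ μ ∪ ν, Lit.negate ℓ ∈ μ ∪ ν then none else some (μ ∪ ν)
  | _, _ => none

/-- The formula `Θ(μ)` associated with a monomial. -/
noncomputable def Theta : Mono AP → LTL AP
  | none => LTL.ff
  | some s => (s.toList.map Lit.toLTL).foldr LTL.conj LTL.tt

/-- A temporal formula: the outermost connective is neither ∧ nor ∨. -/
def Temporal : LTL AP → Prop
  | conj _ _ => False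
  | disj _ _ => False
  | _ => True

/-- Satisfaction of a formal conjunction `⋀Γ` (a finite set of formulae). -/
def SatConj (I : S → Set AP) (Γ : Finset (LTL AP)) (σ : ℕ → S) : Prop :=
  ∀ χ ∈ Γ, Sat I χ σ

/-- Set-based conjunctive normal form `SIMP`. -/
def SIMP [DecidableEq AP] : LTL AP → Finset (Finset (LTL AP))
  | conj φ ψ => (SIMP φ).biUnion fun Γ => (SIMP ψ).image fun Δ => Γ ∪ Δ
  | disj φ ψ => SIMP φ ∪ SIMP ψ
  | φ => {{φ}}

/-- Linear factors `LF(φ)`: pairs of a monomial (≠ ff) and a formal conjunction. -/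
noncomputable def LF [DecidableEq AP] : LTL AP → Finset (Mono AP × Finset (LTL AP))
  | pos p => {(some {Lit.pos p}, ∅)}
  | nneg p => {(some {Lit.neg p}, ∅)}
  | tt => {(some ∅, ∅)}
  | ff => ∅
  | disj φ ψ => LF φ ∪ LF ψ
  | conj φ ψ =>
      ((LF φ ×ˢ LF ψ).image fun pq => (scm pq.1.1 pq.2.1, pq.1.2 ∪ pq.2.2)).filter
        fun mg => mg.1 ≠ none
  | next φ => (SIMP φ).image fun Γ => ((some ∅ : Mono AP), Γ)
  | untl φ ψ => LF ψ ∪ (LF φ).image fun mg => (mg.1, insert (untl φ ψ) mg.2)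
  | rels φ ψ =>
      (((LF φ ×ˢ LF ψ).image fun pq => (scm pq.1.1 pq.2.1, pq.1.2 ∪ pq.2.2)).filter
        fun mg => mg.1 ≠ none)
      ∪ (LF ψ).image fun mg => (mg.1, insert (rels φ ψ) mg.2)

/-- A symbol satisfies a monomial: `x ⊨ μ`. -/
def MonoHolds (I : S → Set AP) (x : S) : Mono AP → Prop
  | none => False
  | some s => ∀ ℓ ∈ s, Lit.Holds I x ℓ

/-- Direct partial derivatives `∂(φ, x)`. -/
noncomputable def pd [DecidableEq AP] (I : S → Set AP) : LTL AP → S → Finset (Finset (LTL AP))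
  | tt, _ => {∅}
  | ff, _ => ∅
  | pos p, x => if p ∈ I x then {∅} else ∅
  | nneg p, x => if p ∉ I x then {∅} else ∅
  | disj φ ψ, x => pd I φ x ∪ pd I ψ x
  | conj φ ψ, x => ((pd I φ x) ×ˢ (pd I ψ x)).image fun gd => gd.1 ∪ gd.2
  | next φ, _ => SIMP φ
  | untl φ ψ, x => pd I ψ x ∪ (pd I φ x).image fun Γ => insert (untl φ ψ) Γ
  | rels φ ψ, x =>
      (((pd I φ x) ×ˢ (pd I ψ x)).image fun gd => gd.1 ∪ gd.2)
      ∪ (pd I ψ x).image fun Δ => insert (rels φ ψ) Δ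

/-- Iterated partial derivatives `∂⁺(φ)`. -/
def dplus [DecidableEq AP] : LTL AP → Finset (LTL AP)
  | pos p => {pos p}
  | nneg p => {nneg p}
  | tt => {tt}
  | ff => {ff}
  | disj φ ψ => dplus φ ∪ dplus ψ
  | conj φ ψ => dplus φ ∪ dplus ψ
  | next φ => insert (next φ) (dplus φ)
  | untl φ ψ => insert (untl φ ψ) (dplus φ ∪ dplus ψ)
  | rels φ ψ => insert (rels φ ψ) (dplus φ ∪ dplus ψ)

/-- Size of a formula: number of occurrences of literals, constants and operators. -/
def size : LTL AP → ℕ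
  | pos _ => 1
  | nneg _ => 1
  | tt => 1
  | ff => 1
  | conj φ ψ => size φ + size ψ + 1
  | disj φ ψ => size φ + size ψ + 1
  | next φ => size φ + 1
  | untl φ ψ => size φ + size ψ + 1
  | rels φ ψ => size φ + size ψ + 1

/-- Partial derivative of a formal conjunction: `∂(Γ, x)`. -/
def pdC [DecidableEq AP] (I : S → Set AP) (Γ : Finset (LTL AP)) (x : S) :
    Set (Finset (LTL AP)) :=
  { Δ | ∃ f : LTL AP → Finset (LTL AP), (∀ χ ∈ Γ, f χ ∈ pd I χ x) ∧ Δ = Γ.biUnion f }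

/-- The set `D(φ)` of partial derivative descendants of `φ` (smallest set closed
under the two rules). -/
inductive Desc [DecidableEq AP] (I : S → Set AP) (φ : LTL AP) : Finset (LTL AP) → Prop
  | base (x : S) (Γ : Finset (LTL AP)) : Γ ∈ pd I φ x → Desc I φ Γ
  | step (x : S) (Γ Δ : Finset (LTL AP)) : Desc I φ Γ → Δ ∈ pdC I Γ x → Desc I φ Δ

lemma dplus_trans {AP : Type} [DecidableEq AP] :
    ∀ (φ ψ : LTL AP), ψ ∈ LTL.dplus φ → LTL.dplus ψ ⊆ LTL.dplus φ := by
  intro φ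
  induction φ with
  | pos p => intro ψ h; simp [LTL.dplus] at h; subst h; simp
  | nneg p => intro ψ h; simp [LTL.dplus] at h; subst h; simp
  | tt => intro ψ h; simp [LTL.dplus] at h; subst h; simp
  | ff => intro ψ h; simp [LTL.dplus] at h; subst h; simp
  | conj φ₁ φ₂ ih1 ih2 =>
      intro ψ h; simp [LTL.dplus] at h
      rcases h with h | h
      · exact (ih1 ψ h).trans Finset.subset_union_left
      · exact (ih2 ψ h).trans Finset.subset_union_right
  | disj φ₁ φ₂ ih1 ih2 =>
      intro ψ h; simp [LTL.dplus] at h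
      rcases h with h | h
      · exact (ih1 ψ h).trans Finset.subset_union_left
      · exact (ih2 ψ h).trans Finset.subset_union_right
  | next φ₁ ih =>
      intro ψ h; simp [LTL.dplus] at h
      rcases h with h | h
      · subst h; exact subset_rfl
      · exact (ih ψ h).trans (Finset.subset_insert _ _)
  | untl φ₁ φ₂ ih1 ih2 =>
      intro ψ h; simp [LTL.dplus] at h
      rcases h with h | h | h
      · subst h; exact subset_rfl
      · exact (ih1 ψ h).trans (Finset.subset_union_left.trans (Finset.subset_insert _ _))
      · exact (ih2 ψ h).trans (Finset.subset_union_right.trans (Finset.subset_insert _ _))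
  | rels φ₁ φ₂ ih1 ih2 =>
      intro ψ h; simp [LTL.dplus] at h
      rcases h with h | h | h
      · subst h; exact subset_rfl
      · exact (ih1 ψ h).trans (Finset.subset_union_left.trans (Finset.subset_insert _ _))
      · exact (ih2 ψ h).trans (Finset.subset_union_right.trans (Finset.subset_insert _ _))

lemma simp_subset {AP : Type} [DecidableEq AP] :
    ∀ (φ : LTL AP) (Γ : Finset (LTL AP)), Γ ∈ LTL.SIMP φ → Γ ⊆ LTL.dplus φ := by
  intro φ
  induction φ with
  | conj φ₁ φ₂ ih1 ih2 =>
      intro Γ h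
      simp [LTL.SIMP] at h
      obtain ⟨A, hA, B, hB, rfl⟩ := h
      exact Finset.union_subset ((ih1 A hA).trans Finset.subset_union_left)
        ((ih2 B hB).trans Finset.subset_union_right)
  | disj φ₁ φ₂ ih1 ih2 =>
      intro Γ h
      simp [LTL.SIMP, LTL.dplus] at h ⊢
      rcases h with h | h
      · exact (ih1 Γ h).trans Finset.subset_union_left
      · exact (ih2 Γ h).trans Finset.subset_union_right
  | pos p => intro Γ h; simp [LTL.SIMP] at h; subst h; simp [LTL.dplus]
  | nneg p => intro Γ h; simp [LTL.SIMP] at h; subst h; simp [LTL.dplus]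
  | tt => intro Γ h; simp [LTL.SIMP] at h; subst h; simp [LTL.dplus]
  | ff => intro Γ h; simp [LTL.SIMP] at h; subst h; simp [LTL.dplus]
  | next φ₁ ih =>
      intro Γ h; simp [LTL.SIMP] at h; subst h
      simp [LTL.dplus]
  | untl φ₁ φ₂ ih1 ih2 =>
      intro Γ h; simp [LTL.SIMP] at h; subst h
      simp [LTL.dplus]
  | rels φ₁ φ₂ ih1 ih2 =>
      intro Γ h; simp [LTL.SIMP] at h; subst h
      simp [LTL.dplus]

lemma pd_subset {AP S : Type} [DecidableEq AP] (I : S → Set AP) (x : S) :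
    ∀ (φ : LTL AP) (Γ : Finset (LTL AP)), Γ ∈ LTL.pd I φ x → Γ ⊆ LTL.dplus φ := by
  intro φ
  induction φ with
  | pos p =>
      intro Γ h; simp only [LTL.pd] at h
      split_ifs at h <;> simp_all
  | nneg p =>
      intro Γ h; simp only [LTL.pd] at h
      split_ifs at h <;> simp_all
  | tt => intro Γ h; simp [LTL.pd] at h; subst h; simp
  | ff => intro Γ h; simp [LTL.pd] at h
  | conj φ₁ φ₂ ih1 ih2 =>
      intro Γ h
      simp [LTL.pd] at h
      obtain ⟨A, B, ⟨hA, hB⟩, rfl⟩ := h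
      simp only [LTL.dplus]
      exact Finset.union_subset ((ih1 A hA).trans Finset.subset_union_left)
        ((ih2 B hB).trans Finset.subset_union_right)
  | disj φ₁ φ₂ ih1 ih2 =>
      intro Γ h
      simp [LTL.pd] at h
      simp only [LTL.dplus]
      rcases h with h | h
      · exact (ih1 Γ h).trans Finset.subset_union_left
      · exact (ih2 Γ h).trans Finset.subset_union_right
  | next φ₁ ih =>
      intro Γ h
      simp only [LTL.dplus]
      exact (simp_subset φ₁ Γ h).trans (Finset.subset_insert _ _)
  | untl φ₁ φ₂ ih1 ih2 =>
      intro Γ h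
      simp [LTL.pd] at h
      simp only [LTL.dplus]
      rcases h with h | ⟨A, hA, rfl⟩
      · exact (ih2 Γ h).trans
          (Finset.subset_union_right.trans (Finset.subset_insert _ _))
      · refine Finset.insert_subset (Finset.mem_insert_self _ _) ?_
        exact (ih1 A hA).trans
          (Finset.subset_union_left.trans (Finset.subset_insert _ _))
  | rels φ₁ φ₂ ih1 ih2 =>
      intro Γ h
      simp [LTL.pd] at h
      simp only [LTL.dplus]
      rcases h with ⟨A, B, ⟨hA, hB⟩, rfl⟩ | ⟨A, hA, rfl⟩
      · refine Finset.union_subset ?_ ?_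
        · exact (ih1 A hA).trans
            (Finset.subset_union_left.trans (Finset.subset_insert _ _))
        · exact (ih2 B hB).trans
            (Finset.subset_union_right.trans (Finset.subset_insert _ _))
      · refine Finset.insert_subset (Finset.mem_insert_self _ _) ?_
        exact (ih2 A hA).trans
          (Finset.subset_union_right.trans (Finset.subset_insert _ _))

lemma desc_subset {AP S : Type} [DecidableEq AP] (I : S → Set AP) (φ : LTL AP)
    (Γ : Finset (LTL AP)) (h : LTL.Desc I φ Γ) : Γ ⊆ LTL.dplus φ := by
  induction h with
  | base x Γ hΓ => exact pd_subset I x φ Γ hΓ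
  | step x Γ Δ hΓ hΔ ih =>
      obtain ⟨f, hf, rfl⟩ := hΔ
      intro ψ hψ
      simp [Finset.mem_biUnion] at hψ
      obtain ⟨χ, hχ, hψ⟩ := hψ
      exact dplus_trans φ χ (ih hχ) (pd_subset I x χ (f χ) (hf χ hχ) hψ)

end LTL

/-- Theorem: the set `D(φ)` of partial derivative descendants of `φ` is finite. -/
theorem desc_finite {AP S : Type} [Fintype AP] [Fintype S] [DecidableEq AP]
    (I : S → Set AP) (φ : LTL AP) :
    {Γ : Finset (LTL AP) | LTL.Desc I φ Γ}.Finite := by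
  apply Set.Finite.subset ((LTL.dplus φ).powerset : Finset (Finset (LTL AP))).finite_toSet
  intro Γ hΓ
  simp [Finset.mem_powerset]
  exact LTL.desc_subset I φ Γ hΓ
end

section
/- (Correctness of the LTL-to-alternating-automaton translation) For every PNF formula φ, the language of the alternating ω-automaton A(φ) built from the partial derivatives of φ, under the Büchi acceptance condition, equals the set of models of φ: for every infinite word σ : ℕ → Σ, σ ⊨ φ if and only if there is an accepting run of A(φ) on σ. -/
open scoped Classical

namespace LTL

/-- Accepting states of `A(φ)`: `tt` and formulae of the form `χ R χ'`. -/
def IsAcc {AP : Type} : LTL AP → Prop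
  | tt => True
  | rels _ _ => True
  | _ => False

/-- A run of the alternating ω-automaton `A(φ)` on the word `σ`:
a directed graph with vertices in `∂⁺(φ) × ℕ`, level-respecting edges,
initial condition given by `SIMP(φ)`, and transitions given by the
partial derivatives. -/
structure Run {AP S : Type} [DecidableEq AP] (I : S → Set AP) (φ : LTL AP)
    (σ : ℕ → S) where
  V : Set (LTL AP × ℕ)
  E : Set ((LTL AP × ℕ) × (LTL AP × ℕ))
  states : ∀ v ∈ V, v.1 ∈ dplus φ
  edges_mem : ∀ e ∈ E, e.1 ∈ V ∧ e.2 ∈ V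
  edges_level : ∀ e ∈ E, e.2.2 = e.1.2 + 1
  init : ∃ Γ ∈ SIMP φ, {q | (q, (0 : ℕ)) ∈ V} = (↑Γ : Set (LTL AP))
  incoming : ∀ q' i, (q', i + 1) ∈ V → ∃ q, ((q, i), (q', i + 1)) ∈ E
  trans : ∀ q i, (q, i) ∈ V →
    ∃ Δ ∈ pd I q (σ i),
      {q' | ((q, i), (q', i + 1)) ∈ E} = (↑Δ : Set (LTL AP))

/-- Büchi acceptance: every infinite path in the run visits accepting
states infinitely often. -/
def Run.Accepting {AP S : Type} [DecidableEq AP] {I : S → Set AP} {φ : LTL AP}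
    {σ : ℕ → S} (r : Run I φ σ) : Prop :=
  ∀ (k : ℕ) (π : ℕ → LTL AP),
    (∀ n, ((π n, k + n), (π (n + 1), k + n + 1)) ∈ r.E) →
    ∀ m, ∃ n ≥ m, IsAcc (π n)

end LTL

/-! Partial derivatives are exact: `σ ⊨ χ` iff `σ[1..]` satisfies some `Δ ∈ ∂(χ, σ 0)`.
Every state in a derivative of `χ` is smaller than `χ`, except `χ` itself when it is a `U` or `R`
formula. Soundness is then an induction on the size of a state: a vertex `(q, i)` of an accepting
run satisfies `σ[i..] ⊨ q`, where an `R`-state may loop forever but a `U`-state may not, since it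
is not accepting. For completeness, pick at every satisfied vertex a satisfied derivative,
discharging `a U b` through `b` whenever `b` holds. Along any path sizes never increase, so the
path ends in a self-loop on an `R`-state, which is accepting, or on a `U`-state, which the choice
rules out because `b` eventually holds. -/

namespace LTL

variable {AP S : Type}

section Semantics

variable {I : S → Set AP}

@[simp]
lemma suffix_zero (σ : ℕ → S) : suffix σ 0 = σ := by
  funext n; simp [suffix]

@[simp]
lemma suffix_suffix (σ : ℕ → S) (i j : ℕ) : suffix (suffix σ i) j = suffix σ (i + j) := by
  funext n; simp [suffix, Nat.add_assoc]

@[simp]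
lemma suffix_apply_zero (σ : ℕ → S) (i : ℕ) : suffix σ i 0 = σ i := rfl

lemma sat_untl_iff {a b : LTL AP} {σ : ℕ → S} :
    Sat I (untl a b) σ ↔ Sat I b σ ∨ Sat I a σ ∧ Sat I (untl a b) (suffix σ 1) := by
  constructor
  · rintro ⟨_ | n, ha, hb⟩
    · exact .inl (by simpa using hb)
    · refine .inr ⟨by simpa using ha 0 n.succ_pos, n, fun j hj => ?_, ?_⟩
      · simpa [Nat.add_comm] using ha (j + 1) (by omega)
      · simpa [Nat.add_comm] using hb
  · rintro (hb | ⟨ha, n, ha', hb⟩)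
    · exact ⟨0, nofun, by simpa using hb⟩
    · refine ⟨n + 1, fun j hj => ?_, by simpa [Nat.add_comm] using hb⟩
      cases j with
      | zero => simpa using ha
      | succ j => simpa [Nat.add_comm] using ha' j (by omega)

lemma sat_rels_iff {a b : LTL AP} {σ : ℕ → S} :
    Sat I (rels a b) σ ↔ Sat I b σ ∧ (Sat I a σ ∨ Sat I (rels a b) (suffix σ 1)) := by
  constructor
  · intro h
    refine ⟨by simpa using (h 0).resolve_right (by simp), or_iff_not_imp_left.2 fun ha n => ?_⟩
    rcases h (n + 1) with hb | ⟨_ | j, hj, hj'⟩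
    · exact .inl (by simpa [Nat.add_comm] using hb)
    · exact absurd (by simpa using hj') ha
    · exact .inr ⟨j, by omega, by simpa [Nat.add_comm] using hj'⟩
  · rintro ⟨hb, hnext⟩ (_ | n)
    · exact .inl (by simpa using hb)
    rcases hnext with ha | h
    · exact .inr ⟨0, n.succ_pos, by simpa using ha⟩
    · rcases h n with hb' | ⟨j, hj, hj'⟩
      · exact .inl (by simpa [Nat.add_comm] using hb')
      · exact .inr ⟨j + 1, by omega, by simpa [Nat.add_comm] using hj'⟩

@[simp]
lemma satConj_empty (σ : ℕ → S) : SatConj I ∅ σ := by simp [SatConj]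

@[simp]
lemma satConj_singleton {χ : LTL AP} {σ : ℕ → S} : SatConj I {χ} σ ↔ Sat I χ σ := by
  simp [SatConj]

variable [DecidableEq AP]

@[simp]
lemma satConj_union {Γ Δ : Finset (LTL AP)} {σ : ℕ → S} :
    SatConj I (Γ ∪ Δ) σ ↔ SatConj I Γ σ ∧ SatConj I Δ σ := by
  simp [SatConj, or_imp, forall_and]

@[simp]
lemma satConj_insert {χ : LTL AP} {Γ : Finset (LTL AP)} {σ : ℕ → S} :
    SatConj I (insert χ Γ) σ ↔ Sat I χ σ ∧ SatConj I Γ σ := by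
  simp [SatConj]

lemma sat_iff_exists_SIMP (χ : LTL AP) (σ : ℕ → S) :
    Sat I χ σ ↔ ∃ Γ ∈ SIMP χ, SatConj I Γ σ := by
  induction χ with
  | conj a b iha ihb =>
    simp only [Sat, SIMP, iha, ihb, Finset.mem_biUnion, Finset.mem_image]
    aesop
  | disj a b iha ihb => simp only [Sat, SIMP, iha, ihb, Finset.mem_union]; aesop
  | _ => simp [SIMP]

lemma sat_iff_exists_pd (χ : LTL AP) (σ : ℕ → S) :
    Sat I χ σ ↔ ∃ Δ ∈ pd I χ (σ 0), SatConj I Δ (suffix σ 1) := by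
  induction χ generalizing σ with
  | pos p => by_cases hp : p ∈ I (σ 0) <;> simp [Sat, pd, hp]
  | nneg p => by_cases hp : p ∈ I (σ 0) <;> simp [Sat, pd, hp]
  | tt => simp [Sat, pd]
  | ff => simp [Sat, pd]
  | conj a b iha ihb =>
    simp only [Sat, pd, iha, ihb, Finset.mem_image, Finset.mem_product, Prod.exists]
    aesop
  | disj a b iha ihb => simp only [Sat, pd, iha, ihb, Finset.mem_union]; aesop
  | next a => simp [Sat, pd, sat_iff_exists_SIMP]
  | untl a b iha ihb =>
    rw [sat_untl_iff, iha, ihb]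
    simp only [pd, Finset.mem_union, Finset.mem_image]
    aesop
  | rels a b iha ihb =>
    rw [sat_rels_iff, iha, ihb]
    simp only [pd, Finset.mem_union, Finset.mem_image, Finset.mem_product, Prod.exists]
    constructor
    · rintro ⟨⟨Δ, hΔ, hbΔ⟩, ⟨Γ, hΓ, haΓ⟩ | hR⟩
      · exact ⟨Γ ∪ Δ, .inl ⟨Γ, Δ, ⟨hΓ, hΔ⟩, rfl⟩, satConj_union.2 ⟨haΓ, hbΔ⟩⟩
      · exact ⟨insert _ Δ, .inr ⟨Δ, hΔ, rfl⟩, satConj_insert.2 ⟨hR, hbΔ⟩⟩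
    · rintro ⟨_, ⟨Γ, Δ, ⟨hΓ, hΔ⟩, rfl⟩ | ⟨Δ, hΔ, rfl⟩, hsat⟩
      · rw [satConj_union] at hsat
        exact ⟨⟨Δ, hΔ, hsat.2⟩, .inl ⟨Γ, hΓ, hsat.1⟩⟩
      · rw [satConj_insert] at hsat
        exact ⟨⟨Δ, hΔ, hsat.2⟩, .inr hsat.1⟩

end Semantics

section Derivatives

variable [DecidableEq AP] {I : S → Set AP}

lemma size_le_of_mem_SIMP {χ ψ : LTL AP} {Γ : Finset (LTL AP)} (hΓ : Γ ∈ SIMP χ)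
    (hψ : ψ ∈ Γ) : size ψ ≤ size χ := by
  induction χ generalizing Γ with
  | conj a b iha ihb =>
    simp only [SIMP, Finset.mem_biUnion, Finset.mem_image] at hΓ
    obtain ⟨Γ₁, h₁, Γ₂, h₂, rfl⟩ := hΓ
    rcases Finset.mem_union.1 hψ with h | h
    · have := iha h₁ h; simp only [size]; omega
    · have := ihb h₂ h; simp only [size]; omega
  | disj a b iha ihb =>
    rcases Finset.mem_union.1 hΓ with h | h
    · have := iha h hψ; simp only [size]; omega
    · have := ihb h hψ; simp only [size]; omega
  | _ => simp_all [SIMP]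

-- `U` and `R`: the only formulae that can occur in their own partial derivatives.
def IsFixpoint : LTL AP → Prop
  | untl _ _ => True
  | rels _ _ => True
  | _ => False

lemma size_lt_of_mem_pd {χ ψ : LTL AP} {x : S} {Δ : Finset (LTL AP)} (hΔ : Δ ∈ pd I χ x)
    (hψ : ψ ∈ Δ) : size ψ < size χ ∨ ψ = χ ∧ IsFixpoint χ := by
  induction χ generalizing Δ with
  | pos p => by_cases hp : p ∈ I x <;> simp_all [pd]
  | nneg p => by_cases hp : p ∈ I x <;> simp_all [pd]
  | tt => simp_all [pd]
  | ff => simp_all [pd]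
  | conj a b iha ihb =>
    simp only [pd, Finset.mem_image, Finset.mem_product, Prod.exists] at hΔ
    obtain ⟨Γ₁, Γ₂, ⟨h₁, h₂⟩, rfl⟩ := hΔ
    left
    rcases Finset.mem_union.1 hψ with h | h
    · rcases iha h₁ h with h' | ⟨rfl, -⟩ <;> simp only [size] <;> omega
    · rcases ihb h₂ h with h' | ⟨rfl, -⟩ <;> simp only [size] <;> omega
  | disj a b iha ihb =>
    left
    rcases Finset.mem_union.1 hΔ with h | h
    · rcases iha h hψ with h' | ⟨rfl, -⟩ <;> simp only [size] <;> omega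
    · rcases ihb h hψ with h' | ⟨rfl, -⟩ <;> simp only [size] <;> omega
  | next a => left; have := size_le_of_mem_SIMP hΔ hψ; simp only [size]; omega
  | untl a b iha ihb =>
    simp only [pd, Finset.mem_union, Finset.mem_image] at hΔ
    rcases hΔ with h | ⟨Γ, hΓ, rfl⟩
    · left; rcases ihb h hψ with h' | ⟨rfl, -⟩ <;> simp only [size] <;> omega
    · rcases Finset.mem_insert.1 hψ with rfl | h
      · exact .inr ⟨rfl, trivial⟩
      · left; rcases iha hΓ h with h' | ⟨rfl, -⟩ <;> simp only [size] <;> omega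
  | rels a b iha ihb =>
    simp only [pd, Finset.mem_union, Finset.mem_image, Finset.mem_product, Prod.exists] at hΔ
    rcases hΔ with ⟨Γ₁, Γ₂, ⟨h₁, h₂⟩, rfl⟩ | ⟨Γ, hΓ, rfl⟩
    · left
      rcases Finset.mem_union.1 hψ with h | h
      · rcases iha h₁ h with h' | ⟨rfl, -⟩ <;> simp only [size] <;> omega
      · rcases ihb h₂ h with h' | ⟨rfl, -⟩ <;> simp only [size] <;> omega
    · rcases Finset.mem_insert.1 hψ with rfl | h
      · exact .inr ⟨rfl, trivial⟩
      · left; rcases ihb hΓ h with h' | ⟨rfl, -⟩ <;> simp only [size] <;> omega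

lemma size_le_of_mem_pd {χ ψ : LTL AP} {x : S} {Δ : Finset (LTL AP)} (hΔ : Δ ∈ pd I χ x)
    (hψ : ψ ∈ Δ) : size ψ ≤ size χ := by
  rcases size_lt_of_mem_pd hΔ hψ with h | ⟨rfl, -⟩
  exacts [h.le, le_rfl]

lemma SIMP_subset_dplus {χ : LTL AP} {Γ : Finset (LTL AP)} (hΓ : Γ ∈ SIMP χ) :
    Γ ⊆ dplus χ := by
  induction χ generalizing Γ with
  | conj a b iha ihb =>
    simp only [SIMP, Finset.mem_biUnion, Finset.mem_image] at hΓ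
    obtain ⟨Γ₁, h₁, Γ₂, h₂, rfl⟩ := hΓ
    exact Finset.union_subset_union (iha h₁) (ihb h₂)
  | disj a b iha ihb =>
    rcases Finset.mem_union.1 hΓ with h | h
    · exact (iha h).trans Finset.subset_union_left
    · exact (ihb h).trans Finset.subset_union_right
  | _ => simp_all [SIMP, dplus]

lemma pd_subset_dplus {χ : LTL AP} {x : S} {Δ : Finset (LTL AP)} (hΔ : Δ ∈ pd I χ x) :
    Δ ⊆ dplus χ := by
  induction χ generalizing Δ with
  | pos p => by_cases hp : p ∈ I x <;> simp_all [pd]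
  | nneg p => by_cases hp : p ∈ I x <;> simp_all [pd]
  | tt => simp_all [pd]
  | ff => simp_all [pd]
  | conj a b iha ihb =>
    simp only [pd, Finset.mem_image, Finset.mem_product, Prod.exists] at hΔ
    obtain ⟨Γ₁, Γ₂, ⟨h₁, h₂⟩, rfl⟩ := hΔ
    exact Finset.union_subset_union (iha h₁) (ihb h₂)
  | disj a b iha ihb =>
    rcases Finset.mem_union.1 hΔ with h | h
    · exact (iha h).trans Finset.subset_union_left
    · exact (ihb h).trans Finset.subset_union_right
  | next a => exact (SIMP_subset_dplus hΔ).trans (Finset.subset_insert _ _)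
  | untl a b iha ihb =>
    simp only [pd, Finset.mem_union, Finset.mem_image] at hΔ
    rcases hΔ with h | ⟨Γ, hΓ, rfl⟩
    · exact ((ihb h).trans Finset.subset_union_right).trans (Finset.subset_insert _ _)
    · exact Finset.insert_subset_insert _ ((iha hΓ).trans Finset.subset_union_left)
  | rels a b iha ihb =>
    simp only [pd, Finset.mem_union, Finset.mem_image, Finset.mem_product, Prod.exists] at hΔ
    rcases hΔ with ⟨Γ₁, Γ₂, ⟨h₁, h₂⟩, rfl⟩ | ⟨Γ, hΓ, rfl⟩
    · exact (Finset.union_subset_union (iha h₁) (ihb h₂)).trans (Finset.subset_insert _ _)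
    · exact Finset.insert_subset_insert _ ((ihb hΓ).trans Finset.subset_union_right)

lemma dplus_subset_of_mem {φ χ : LTL AP} (hχ : χ ∈ dplus φ) : dplus χ ⊆ dplus φ := by
  induction φ with
  | conj a b iha ihb | disj a b iha ihb =>
    rcases Finset.mem_union.1 hχ with h | h
    · exact (iha h).trans Finset.subset_union_left
    · exact (ihb h).trans Finset.subset_union_right
  | next a iha =>
    rcases Finset.mem_insert.1 hχ with rfl | h
    · rfl
    · exact (iha h).trans (Finset.subset_insert _ _)
  | untl a b iha ihb | rels a b iha ihb =>
    rcases Finset.mem_insert.1 hχ with rfl | h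
    · rfl
    rcases Finset.mem_union.1 h with h | h
    · exact (iha h).trans (Finset.subset_union_left.trans (Finset.subset_insert _ _))
    · exact (ihb h).trans (Finset.subset_union_right.trans (Finset.subset_insert _ _))
  | _ => simp_all [dplus]

end Derivatives

section

variable {P A B : ℕ → Prop}

lemma until_or_forall_of_step (hstep : ∀ j, P j → B j ∨ A j ∧ P (j + 1)) (h₀ : P 0) :
    (∃ n, (∀ j < n, A j) ∧ B n) ∨ ∀ j, P j ∧ ¬ B j := by
  by_contra! ⟨hU, j, hj⟩
  have : ∀ k, P k ∧ ∀ i < k, A i := by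
    intro k
    induction k with
    | zero => exact ⟨h₀, nofun⟩
    | succ k ih =>
      rcases hstep k ih.1 with hB | ⟨hA, hP⟩
      · exact absurd hB (hU k ih.2)
      · exact ⟨hP, fun i hi => (Nat.lt_succ_iff_lt_or_eq.1 hi).elim (ih.2 i) (· ▸ hA)⟩
  exact hU j (this j).2 (hj (this j).1)

lemma release_of_step (hstep : ∀ j, P j → B j ∧ (A j ∨ P (j + 1))) (h₀ : P 0) :
    ∀ n, B n ∨ ∃ j < n, A j := by
  by_contra! ⟨n, hB, hA⟩
  have : ∀ k ≤ n, P k := by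
    intro k hk
    induction k with
    | zero => exact h₀
    | succ k ih => exact ((hstep k (ih (by omega))).2.resolve_left (hA k (by omega)))
  exact hB (hstep n (this n le_rfl)).1

end

lemma exists_forall_ge_eq_of_size_lt_or_eq {π : ℕ → LTL AP}
    (hπ : ∀ n, size (π (n + 1)) < size (π n) ∨ π (n + 1) = π n) :
    ∃ m, ∀ n ≥ m, π n = π m := by
  have hanti : Antitone (size ∘ π) := antitone_nat_of_succ_le fun n => by
    rcases hπ n with h | h
    · exact h.le
    · simp [h]
  obtain ⟨m, hm⟩ := WellFoundedLT.antitone_chain_condition hanti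
  refine ⟨m, fun n hn => ?_⟩
  induction n, hn using Nat.le_induction with
  | base => rfl
  | succ n hn ih =>
    rcases hπ n with h | h
    · exact absurd h ((hm n hn).symm.trans (hm (n + 1) (by omega))).le.not_gt
    · rw [h, ih]

namespace Run

variable [DecidableEq AP] {I : S → Set AP} {φ : LTL AP} {σ : ℕ → S} (r : Run I φ σ)

lemma mem_V_of_mem_E {v w : LTL AP × ℕ} (h : (v, w) ∈ r.E) : w ∈ r.V :=
  (r.edges_mem _ h).2

lemma exists_pd_forall_mem_E {q : LTL AP} {i : ℕ} (hv : (q, i) ∈ r.V) :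
    ∃ Δ ∈ pd I q (σ i), ∀ ψ ∈ Δ, ((q, i), (ψ, i + 1)) ∈ r.E := by
  obtain ⟨Δ, hΔ, hE⟩ := r.trans q i hv
  exact ⟨Δ, hΔ, fun ψ hψ => (Set.ext_iff.1 hE ψ).2 hψ⟩

variable {N : ℕ}

lemma sat_of_mem_pd (ih : ∀ ψ j, size ψ < N → (ψ, j) ∈ r.V → Sat I ψ (suffix σ j))
    {χ : LTL AP} {j : ℕ} {Δ : Finset (LTL AP)} (hχ : size χ < N)
    (hΔ : Δ ∈ pd I χ (σ j)) (hV : ∀ ψ ∈ Δ, (ψ, j + 1) ∈ r.V) : Sat I χ (suffix σ j) := by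
  refine (sat_iff_exists_pd χ _).2 ⟨Δ, hΔ, fun ψ hψ => ?_⟩
  rw [suffix_suffix]
  exact ih ψ _ ((size_le_of_mem_pd hΔ hψ).trans_lt hχ) (hV ψ hψ)

lemma sat_untl_of_mem_V (hacc : r.Accepting) {a b : LTL AP} {i : ℕ}
    (ih : ∀ ψ j, size ψ < size (untl a b) → (ψ, j) ∈ r.V → Sat I ψ (suffix σ j))
    (hv : (untl a b, i) ∈ r.V) : Sat I (untl a b) (suffix σ i) := by
  have hstep : ∀ j, (untl a b, i + j) ∈ r.V →
      Sat I b (suffix σ (i + j)) ∨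
        (Sat I a (suffix σ (i + j)) ∧ ((untl a b, i + j), (untl a b, i + j + 1)) ∈ r.E) ∧
          (untl a b, i + (j + 1)) ∈ r.V := by
    intro j hj
    obtain ⟨Δ, hΔ, hE⟩ := r.exists_pd_forall_mem_E hj
    simp only [pd, Finset.mem_union, Finset.mem_image] at hΔ
    rcases hΔ with hΔ | ⟨Γ, hΓ, rfl⟩
    · exact .inl <| r.sat_of_mem_pd ih (by simp only [size]; omega) hΔ
        fun ψ hψ => r.mem_V_of_mem_E (hE ψ hψ)
    · have hloop := hE _ (Finset.mem_insert_self _ _)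
      refine .inr ⟨⟨r.sat_of_mem_pd ih (by simp only [size]; omega) hΓ fun ψ hψ => ?_, hloop⟩,
        r.mem_V_of_mem_E hloop⟩
      exact r.mem_V_of_mem_E (hE ψ (Finset.mem_insert_of_mem hψ))
  rcases until_or_forall_of_step hstep (by simpa using hv) with ⟨n, ha, hb⟩ | hforall
  · exact ⟨n, fun j hj => by simpa using (ha j hj).1, by simpa using hb⟩
  · have hpath n := ((hstep n (hforall n).1).resolve_left (hforall n).2).1.2
    obtain ⟨n, -, hn⟩ := hacc i (fun _ => untl a b) hpath 0
    exact hn.elim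

lemma sat_rels_of_mem_V {a b : LTL AP} {i : ℕ}
    (ih : ∀ ψ j, size ψ < size (rels a b) → (ψ, j) ∈ r.V → Sat I ψ (suffix σ j))
    (hv : (rels a b, i) ∈ r.V) : Sat I (rels a b) (suffix σ i) := by
  have hstep : ∀ j, (rels a b, i + j) ∈ r.V →
      Sat I b (suffix σ (i + j)) ∧
        (Sat I a (suffix σ (i + j)) ∨ (rels a b, i + (j + 1)) ∈ r.V) := by
    intro j hj
    obtain ⟨Δ, hΔ, hE⟩ := r.exists_pd_forall_mem_E hj
    simp only [pd, Finset.mem_union, Finset.mem_image, Finset.mem_product, Prod.exists] at hΔ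
    rcases hΔ with ⟨Γ, Δ, ⟨hΓ, hΔ⟩, rfl⟩ | ⟨Δ, hΔ, rfl⟩
    · refine ⟨r.sat_of_mem_pd ih (by simp only [size]; omega) hΔ fun ψ hψ => ?_,
        .inl <| r.sat_of_mem_pd ih (by simp only [size]; omega) hΓ fun ψ hψ => ?_⟩
      · exact r.mem_V_of_mem_E (hE ψ (Finset.mem_union_right _ hψ))
      · exact r.mem_V_of_mem_E (hE ψ (Finset.mem_union_left _ hψ))
    · refine ⟨r.sat_of_mem_pd ih (by simp only [size]; omega) hΔ fun ψ hψ => ?_,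
        .inr <| r.mem_V_of_mem_E (hE _ (Finset.mem_insert_self _ _))⟩
      exact r.mem_V_of_mem_E (hE ψ (Finset.mem_insert_of_mem hψ))
  intro n
  simpa using release_of_step hstep (by simpa using hv) n

theorem sat_of_mem_V (hacc : r.Accepting) {q : LTL AP} {i : ℕ} (hv : (q, i) ∈ r.V) :
    Sat I q (suffix σ i) := by
  induction hq : size q using Nat.strong_induction_on generalizing q i with
  | _ n ih' =>
  have ih : ∀ ψ j, size ψ < size q → (ψ, j) ∈ r.V → Sat I ψ (suffix σ j) :=
    fun ψ j hψ hv => ih' _ (hq ▸ hψ) hv rfl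
  by_cases hfix : IsFixpoint q
  · cases q with
    | untl a b => exact r.sat_untl_of_mem_V hacc ih hv
    | rels a b => exact r.sat_rels_of_mem_V ih hv
    | _ => exact hfix.elim
  · obtain ⟨Δ, hΔ, hE⟩ := r.exists_pd_forall_mem_E hv
    refine (sat_iff_exists_pd q _).2 ⟨Δ, hΔ, fun ψ hψ => ?_⟩
    rw [suffix_suffix]
    exact ih ψ _ ((size_lt_of_mem_pd hΔ hψ).resolve_right (hfix ·.2)) (r.mem_V_of_mem_E (hE ψ hψ))

theorem sat_of_accepting (hacc : r.Accepting) : Sat I φ σ := by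
  obtain ⟨Γ, hΓ, hV⟩ := r.init
  refine (sat_iff_exists_SIMP φ σ).2 ⟨Γ, hΓ, fun ψ hψ => ?_⟩
  have hψV : ψ ∈ {q | (q, 0) ∈ r.V} := hV ▸ hψ
  simpa using r.sat_of_mem_V hacc hψV

end Run


section Completeness

variable [DecidableEq AP] {I : S → Set AP} {φ : LTL AP} {σ : ℕ → S}

lemma exists_pd_of_sat_not_mem_untl {χ : LTL AP} (h : Sat I χ σ) :
    ∃ Δ ∈ pd I χ (σ 0), SatConj I Δ (suffix σ 1) ∧
      ∀ a b, χ = untl a b → Sat I b σ → χ ∉ Δ := by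
  by_cases hχ : ∃ a b, χ = untl a b ∧ Sat I b σ
  · obtain ⟨a, b, rfl, hb⟩ := hχ
    obtain ⟨Δ, hΔ, hsat⟩ := (sat_iff_exists_pd b σ).1 hb
    refine ⟨Δ, Finset.mem_union_left _ hΔ, hsat, fun _ _ _ _ hmem => ?_⟩
    have := size_le_of_mem_pd hΔ hmem
    simp only [size] at this
    omega
  · obtain ⟨Δ, hΔ, hsat⟩ := (sat_iff_exists_pd χ σ).1 h
    exact ⟨Δ, hΔ, hsat, fun a b hab hb => (hχ ⟨a, b, hab, hb⟩).elim⟩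

def level (Γ₀ : Finset (LTL AP)) (g : LTL AP → ℕ → Finset (LTL AP)) : ℕ → Finset (LTL AP)
  | 0 => Γ₀
  | i + 1 => (level Γ₀ g i).biUnion fun q => g q i

variable {Γ₀ : Finset (LTL AP)} {g : LTL AP → ℕ → Finset (LTL AP)}

lemma level_subset_dplus (hΓ₀ : Γ₀ ∈ SIMP φ)
    (hg : ∀ i, ∀ q ∈ level Γ₀ g i, g q i ∈ pd I q (σ i)) (i : ℕ) :
    level Γ₀ g i ⊆ dplus φ := by
  induction i with
  | zero => exact SIMP_subset_dplus hΓ₀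
  | succ i ih =>
    refine Finset.biUnion_subset.2 fun q hq => ?_
    exact (pd_subset_dplus (hg i q hq)).trans (dplus_subset_of_mem (ih hq))

def Run.ofChoice (hΓ₀ : Γ₀ ∈ SIMP φ)
    (hg : ∀ i, ∀ q ∈ level Γ₀ g i, g q i ∈ pd I q (σ i)) : Run I φ σ where
  V := {v | v.1 ∈ level Γ₀ g v.2}
  E := {e | e.2.2 = e.1.2 + 1 ∧ e.1.1 ∈ level Γ₀ g e.1.2 ∧ e.2.1 ∈ g e.1.1 e.1.2}
  states v hv := level_subset_dplus hΓ₀ hg v.2 hv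
  edges_mem := by
    rintro ⟨⟨q, i⟩, ⟨q', j⟩⟩ ⟨hj, hq, hq'⟩
    simp only at hj
    subst hj
    exact ⟨hq, Finset.mem_biUnion.2 ⟨q, hq, hq'⟩⟩
  edges_level _ he := he.1
  init := ⟨Γ₀, hΓ₀, rfl⟩
  incoming q' i hq' := by
    obtain ⟨q, hq, hq'⟩ := Finset.mem_biUnion.1 hq'
    exact ⟨q, rfl, hq, hq'⟩
  trans q i hq := ⟨g q i, hg i q hq, Set.ext fun _ => ⟨fun h => h.2.2, fun h => ⟨rfl, hq, h⟩⟩⟩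

lemma Run.ofChoice_accepting (hΓ₀ : Γ₀ ∈ SIMP φ)
    (hg : ∀ i, ∀ q ∈ level Γ₀ g i, g q i ∈ pd I q (σ i))
    (hfair : ∀ a b i, untl a b ∈ level Γ₀ g i → ∃ j ≥ i, untl a b ∉ g (untl a b) j) :
    (Run.ofChoice hΓ₀ hg).Accepting := by
  intro k π hπ m
  have hstep n : π (n + 1) ∈ g (π n) (k + n) := (hπ n).2.2
  have hmem n : g (π n) (k + n) ∈ pd I (π n) (σ (k + n)) := hg _ _ (hπ n).2.1
  obtain ⟨m', hm'⟩ := exists_forall_ge_eq_of_size_lt_or_eq fun n =>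
    (size_lt_of_mem_pd (hmem n) (hstep n)).imp_right And.left
  have hloop : ∀ n ≥ m', π m' ∈ g (π m') (k + n) := fun n hn => by
    simpa [hm' n hn, hm' (n + 1) (by omega)] using hstep n
  have hfix : IsFixpoint (π m') :=
    ((size_lt_of_mem_pd (hmem m') (hm' (m' + 1) (by omega) ▸ hstep m')).resolve_left
      (lt_irrefl _)).2
  refine ⟨max m m', le_max_left _ _, ?_⟩
  rw [hm' _ (le_max_right _ _)]
  generalize hq : π m' = q at hfix hloop
  cases q with
  | rels a b => trivial
  | untl a b =>
    obtain ⟨j, hj, hnot⟩ := hfair a b (k + m') (hq ▸ (hπ m').2.1)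
    exact hnot (by simpa [Nat.add_sub_cancel' (by omega : k ≤ j)] using hloop (j - k) (by omega))
  | _ => exact hfix.elim

theorem exists_accepting_run_of_sat (h : Sat I φ σ) : ∃ r : Run I φ σ, r.Accepting := by
  obtain ⟨Γ₀, hΓ₀, hsat₀⟩ := (sat_iff_exists_SIMP φ σ).1 h
  have hchoice q i : ∃ Δ, Sat I q (suffix σ i) → Δ ∈ pd I q (σ i) ∧
      SatConj I Δ (suffix σ (i + 1)) ∧ ∀ a b, q = untl a b → Sat I b (suffix σ i) → q ∉ Δ := by
    by_cases hq : Sat I q (suffix σ i)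
    · obtain ⟨Δ, hΔ, hsat, hfair⟩ := exists_pd_of_sat_not_mem_untl hq
      exact ⟨Δ, fun _ => ⟨by simpa using hΔ, by simpa using hsat, hfair⟩⟩
    · exact ⟨∅, fun h => (hq h).elim⟩
  choose g hg using hchoice
  have hsat : ∀ i, ∀ q ∈ level Γ₀ g i, Sat I q (suffix σ i) := by
    intro i
    induction i with
    | zero => exact fun q hq => by simpa using hsat₀ q hq
    | succ i ih =>
      intro q hq
      obtain ⟨p, hp, hq⟩ := Finset.mem_biUnion.1 hq
      exact (hg p i (ih p hp)).2.1 q hq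
  have hpd i q hq := (hg q i (hsat i q hq)).1
  refine ⟨Run.ofChoice hΓ₀ hpd, Run.ofChoice_accepting hΓ₀ hpd fun a b i hi => ?_⟩
  obtain ⟨n, -, hb⟩ := hsat i _ hi
  rw [suffix_suffix] at hb
  exact ⟨i + n, by omega, (hg _ _ (sat_untl_iff.2 (.inl hb))).2.2 a b rfl hb⟩

end Completeness

end LTL

theorem ltl_to_aa_correct_general {AP S : Type} [DecidableEq AP]
    (I : S → Set AP) (φ : LTL AP) (σ : ℕ → S) :
    LTL.Sat I φ σ ↔ ∃ r : LTL.Run I φ σ, r.Accepting :=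
  ⟨LTL.exists_accepting_run_of_sat, fun ⟨r, hacc⟩ => r.sat_of_accepting hacc⟩

/-- Correctness of the LTL-to-alternating-automaton translation:
`σ ⊨ φ` iff there is an accepting run of `A(φ)` on `σ`. -/
theorem ltl_to_aa_correct {AP S : Type} [Fintype AP] [Fintype S] [DecidableEq AP]
    (I : S → Set AP) (φ : LTL AP) (σ : ℕ → S) :
    LTL.Sat I φ σ ↔ ∃ r : LTL.Run I φ σ, r.Accepting :=
  ltl_to_aa_correct_general I φ σ
end
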